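/- arXiv:2407.08565 — 2 statements merged into one kernel-verified Lean document; each statement's English description precedes it below -/
import Mathlib

section
/- Truncation error bound for the inverted errors (Lemma A.4 of the paper, part 1): In the TMA(1) setup, define the truncated version ε̃_t(θ) = σ^{-1}( X_t + Σ_{j=1}^{t−1} ( ∏_{i=1}^{j} A_{t−i}(θ) ) X_{t−j} ) for t ≥ 1. Then almost surely the random variable S = Σ_{j=0}^∞ c₁^j |X_{−j}| is finite and for every integer t ≥ 1 and every θ ∈ Θ, |ε̃_t(θ) − ε_t(θ)| ≤ c₂^{-1/2} c₁^t S. -/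
open MeasureTheory ProbabilityTheory

/-- TMA(1) parameter space `Θ = {(φ, ξ, σ²) : |φ| ≤ c₁, |φ+ξ| ≤ c₁, c₂ ≤ σ² ≤ c₃}`. -/
def tmaTheta (c₁ c₂ c₃ : ℝ) : Set (ℝ × ℝ × ℝ) :=
  {θ | |θ.1| ≤ c₁ ∧ |θ.1 + θ.2.1| ≤ c₁ ∧ c₂ ≤ θ.2.2 ∧ θ.2.2 ≤ c₃}

/-- Inversion coefficient `A_t(θ) = -(φ + ξ·1{X_t ≤ u})`. -/
noncomputable def tmaA {Ω : Type*} (X : ℤ → Ω → ℝ) (u : ℝ) (θ : ℝ × ℝ × ℝ)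
    (t : ℤ) (ω : Ω) : ℝ :=
  -(θ.1 + θ.2.1 * (if X t ω ≤ u then 1 else 0))

/-- Inverted error `ε_t(θ) = σ⁻¹(X_t + Σ_{j≥1} (∏_{i=1}^j A_{t−i}(θ)) X_{t−j})`, written as
`σ⁻¹ Σ_{j≥0} (∏_{i=1}^j A_{t−i}(θ)) X_{t−j}` (the `j = 0` term is `X_t`), `σ = √(σ²)`. -/
noncomputable def tmaEps {Ω : Type*} (X : ℤ → Ω → ℝ) (u : ℝ) (θ : ℝ × ℝ × ℝ)
    (t : ℤ) (ω : Ω) : ℝ :=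
  (Real.sqrt θ.2.2)⁻¹ *
    ∑' j : ℕ, (∏ i ∈ Finset.Icc 1 j, tmaA X u θ (t - (i : ℤ)) ω) * X (t - j) ω

/-- Truncated inverted error `ε̃_t(θ) = σ⁻¹(X_t + Σ_{j=1}^{t−1} (∏_{i=1}^j A_{t−i}(θ)) X_{t−j})`,
written as `σ⁻¹ Σ_{j=0}^{t−1} (∏_{i=1}^j A_{t−i}(θ)) X_{t−j}`. -/
noncomputable def tmaEpsT {Ω : Type*} (X : ℤ → Ω → ℝ) (u : ℝ) (θ : ℝ × ℝ × ℝ)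
    (t : ℕ) (ω : Ω) : ℝ :=
  (Real.sqrt θ.2.2)⁻¹ *
    ∑ j ∈ Finset.range t, (∏ i ∈ Finset.Icc 1 j, tmaA X u θ ((t : ℤ) - (i : ℤ)) ω) *
      X ((t : ℤ) - (j : ℤ)) ω

/-!
Since `|A_s(θ)| ≤ c₁`, the `j`-th term of the series defining `ε_t(θ)` is at most
`c₂^{-1/2} c₁^j |X_{t-j}|`, and the terms with `j ≥ t`, which are exactly those dropped by the
truncation, add up to at most `c₂^{-1/2} c₁^t S`. The series `S` converges almost surely because
`E S < ∞`: the model coefficient is bounded by `c₁ < 1`, so `E|X_t| ≤ 2 σ₀ E|N(0,1)|` for all `t`.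
-/

open Finset Filter
open scoped ENNReal

section GeometricSeries

variable {Ω : Type*} [MeasurableSpace Ω] {μ : Measure Ω}

theorem ae_summable_geometric_mul_abs {Y : ℕ → Ω → ℝ} (hY : ∀ n, AEStronglyMeasurable (Y n) μ)
    {C : ℝ≥0∞} (hC : C ≠ ∞) (hYC : ∀ n, eLpNorm (Y n) 1 μ ≤ C) {r : ℝ} (hr₀ : 0 ≤ r)
    (hr₁ : r < 1) :
    ∀ᵐ ω ∂μ, Summable fun n => r ^ n * |Y n ω| := by
  have hr : ‖r‖ₑ < 1 := by simpa [Real.enorm_eq_ofReal_abs, abs_of_nonneg hr₀] using hr₁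
  have hsum : ∑' n, eLpNorm (r ^ n • Y n) 1 μ ≠ ∞ := by
    refine ne_top_of_le_ne_top ?_ (ENNReal.tsum_le_tsum fun n =>
      (eLpNorm_const_smul_le (c := r ^ n)).trans (mul_le_mul' le_rfl (hYC n)))
    rw [ENNReal.tsum_mul_right]
    simp only [enorm_pow, ENNReal.tsum_geometric]
    exact ENNReal.mul_ne_top (ENNReal.inv_ne_top.2 (tsub_pos_of_lt hr).ne') hC
  filter_upwards [summable_norm_of_tsum_eLpNorm_ne_top le_rfl
    (fun n => (hY n).const_smul (r ^ n)) hsum] with ω hω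
  simpa [abs_mul, abs_of_nonneg hr₀] using hω

theorem abs_sum_range_sub_tsum_le {f g : ℕ → ℝ} (t : ℕ) (hfg : ∀ j, |f j| ≤ g j)
    (hg : Summable fun k => g (k + t)) :
    |∑ j ∈ range t, f j - ∑' j, f j| ≤ ∑' k, g (k + t) := by
  have hf : Summable f := (summable_nat_add_iff t).1
    (hg.of_norm_bounded (f := fun k => f (k + t)) fun k => hfg (k + t))
  rw [← hf.sum_add_tsum_nat_add t, sub_add_cancel_left, abs_neg]
  exact tsum_of_norm_bounded (f := fun k => f (k + t)) hg.hasSum fun k => hfg (k + t)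

end GeometricSeries

section InvertedErrors

variable {Ω : Type*} (X : ℤ → Ω → ℝ) (u : ℝ) {c₁ c₂ c₃ : ℝ} {θ : ℝ × ℝ × ℝ}

theorem abs_tmaA_le (hθ : θ ∈ tmaTheta c₁ c₂ c₃) (s : ℤ) (ω : Ω) : |tmaA X u θ s ω| ≤ c₁ := by
  obtain ⟨hφ, hφξ, -⟩ := hθ
  rw [tmaA, abs_neg]
  split_ifs <;> simpa

theorem abs_prod_tmaA_le (hθ : θ ∈ tmaTheta c₁ c₂ c₃) (t : ℤ) (j : ℕ) (ω : Ω) :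
    |∏ i ∈ Icc 1 j, tmaA X u θ (t - i) ω| ≤ c₁ ^ j := by
  calc |∏ i ∈ Icc 1 j, tmaA X u θ (t - i) ω| = ∏ i ∈ Icc 1 j, |tmaA X u θ (t - i) ω| :=
        abs_prod _ _
    _ ≤ ∏ _i ∈ Icc 1 j, c₁ :=
        prod_le_prod (fun _ _ => abs_nonneg _) fun i _ => abs_tmaA_le X u hθ _ ω
    _ = c₁ ^ j := by simp

theorem abs_tmaEpsT_sub_tmaEps_le (hc₂ : 0 < c₂) (hθ : θ ∈ tmaTheta c₁ c₂ c₃) (ω : Ω) (t : ℕ)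
    (hS : Summable fun j : ℕ => c₁ ^ j * |X (-(j : ℤ)) ω|) :
    |tmaEpsT X u θ t ω - tmaEps X u θ t ω|
      ≤ (Real.sqrt c₂)⁻¹ * c₁ ^ t * ∑' j : ℕ, c₁ ^ j * |X (-(j : ℤ)) ω| := by
  have hshift (k : ℕ) : c₁ ^ (k + t) * |X (t - (k + t : ℕ)) ω|
      = c₁ ^ t * (c₁ ^ k * |X (-(k : ℤ)) ω|) := by
    rw [Nat.cast_add, sub_add_cancel_right, pow_add]
    ring
  have htail := abs_sum_range_sub_tsum_le (g := fun j => c₁ ^ j * |X (t - j) ω|) t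
    (fun j => (abs_mul _ _).trans_le
      (mul_le_mul_of_nonneg_right (abs_prod_tmaA_le X u hθ t j ω) (abs_nonneg _)))
    ((hS.mul_left (c₁ ^ t)).congr fun k => (hshift k).symm)
  simp only [hshift, tsum_mul_left] at htail
  have hσ : (Real.sqrt θ.2.2)⁻¹ ≤ (Real.sqrt c₂)⁻¹ :=
    inv_anti₀ (Real.sqrt_pos.2 hc₂) (Real.sqrt_le_sqrt hθ.2.2.1)
  rw [tmaEpsT, tmaEps, ← mul_sub, abs_mul, abs_of_nonneg (by positivity), mul_assoc]
  exact mul_le_mul hσ htail (abs_nonneg _) (by positivity)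

end InvertedErrors

section Model

theorem abs_tma_le {φ ξ σ x y : ℝ} (p : Prop) [Decidable p] (hφ : |φ| ≤ 1) (hφξ : |φ + ξ| ≤ 1)
    (hσ : 0 ≤ σ) : |(φ + ξ * (if p then 1 else 0)) * σ * x + σ * y| ≤ σ * (|x| + |y|) := by
  set a := φ + ξ * (if p then 1 else 0)
  have ha : |a| ≤ 1 := by unfold a; split_ifs <;> simpa
  calc |a * σ * x + σ * y| ≤ |a * σ * x| + |σ * y| := abs_add_le _ _
    _ = |a| * σ * |x| + σ * |y| := by rw [abs_mul, abs_mul, abs_mul, abs_of_nonneg hσ]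
    _ ≤ 1 * σ * |x| + σ * |y| := by gcongr
    _ = σ * (|x| + |y|) := by ring

variable {Ω : Type*} [MeasurableSpace Ω] {P : Measure Ω} {u φ₀ ξ₀ s₀ : ℝ} {e X : ℤ → Ω → ℝ}

theorem eLpNorm_one_le_of_tma (hφ : |φ₀| ≤ 1) (hφξ : |φ₀ + ξ₀| ≤ 1) (he : ∀ t, Measurable (e t))
    (heG : ∀ t, P.map (e t) = gaussianReal 0 1)
    (hmodel : ∀ᵐ ω ∂P, ∀ t : ℤ, X t ω =
      (φ₀ + ξ₀ * (if X (t - 1) ω ≤ u then 1 else 0)) * Real.sqrt s₀ * e (t - 1) ω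
        + Real.sqrt s₀ * e t ω) (t : ℤ) :
    eLpNorm (X t) 1 P ≤ ‖Real.sqrt s₀‖ₑ * (2 * eLpNorm id 1 (gaussianReal 0 1)) := by
  have he_norm (t : ℤ) : eLpNorm (fun ω => |e t ω|) 1 P = eLpNorm id 1 (gaussianReal 0 1) := by
    rw [← heG t, eLpNorm_map_measure aestronglyMeasurable_id (he t).aemeasurable]
    exact eLpNorm_norm (e t)
  calc eLpNorm (X t) 1 P
      ≤ eLpNorm (fun ω => Real.sqrt s₀ * (|e (t - 1) ω| + |e t ω|)) 1 P := by
        refine eLpNorm_mono_ae_real ?_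
        filter_upwards [hmodel] with ω hω
        rw [hω t]
        exact abs_tma_le _ hφ hφξ (Real.sqrt_nonneg _)
    _ ≤ ‖Real.sqrt s₀‖ₑ * eLpNorm (fun ω => |e (t - 1) ω| + |e t ω|) 1 P :=
        eLpNorm_const_smul_le (c := Real.sqrt s₀) (f := fun ω => |e (t - 1) ω| + |e t ω|)
    _ ≤ ‖Real.sqrt s₀‖ₑ *
          (eLpNorm (fun ω => |e (t - 1) ω|) 1 P + eLpNorm (fun ω => |e t ω|) 1 P) := by
        gcongr
        exact eLpNorm_add_le (he _).abs.aestronglyMeasurable (he _).abs.aestronglyMeasurable le_rfl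
    _ = ‖Real.sqrt s₀‖ₑ * (2 * eLpNorm id 1 (gaussianReal 0 1)) := by
        rw [he_norm, he_norm, two_mul]

end Model

theorem stmt7_general {Ω : Type*} [MeasurableSpace Ω] (P : Measure Ω)
    (u c₁ c₂ c₃ : ℝ) (hc₁ : 0 < c₁) (hc₁' : c₁ < 1) (hc₂ : 0 < c₂)
    (φ₀ ξ₀ s₀ : ℝ) (hθ₀ : (φ₀, ξ₀, s₀) ∈ tmaTheta c₁ c₂ c₃)
    (e X : ℤ → Ω → ℝ) (he : ∀ t, Measurable (e t)) (hX : ∀ t, Measurable (X t))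
    (heG : ∀ t, P.map (e t) = gaussianReal 0 1)
    (hmodel : ∀ᵐ ω ∂P, ∀ t : ℤ, X t ω =
      (φ₀ + ξ₀ * (if X (t - 1) ω ≤ u then 1 else 0)) * Real.sqrt s₀ * e (t - 1) ω
        + Real.sqrt s₀ * e t ω) :
    ∀ᵐ ω ∂P,
      Summable (fun j : ℕ => c₁ ^ j * |X (-(j : ℤ)) ω|) ∧
      ∀ t : ℕ, 1 ≤ t → ∀ θ ∈ tmaTheta c₁ c₂ c₃,
        |tmaEpsT X u θ t ω - tmaEps X u θ (t : ℤ) ω|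
          ≤ (Real.sqrt c₂)⁻¹ * c₁ ^ t * ∑' j : ℕ, c₁ ^ j * |X (-(j : ℤ)) ω| := by
  obtain ⟨hφ, hφξ, -⟩ := hθ₀
  have hXnorm := eLpNorm_one_le_of_tma (hφ.trans hc₁'.le) (hφξ.trans hc₁'.le) he heG hmodel
  have hC : ‖Real.sqrt s₀‖ₑ * (2 * eLpNorm id 1 (gaussianReal 0 1)) ≠ ∞ :=
    ENNReal.mul_ne_top enorm_ne_top
      (ENNReal.mul_ne_top ENNReal.ofNat_ne_top (memLp_id_gaussianReal' 1 ENNReal.one_ne_top).2.ne)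
  filter_upwards [ae_summable_geometric_mul_abs (fun j => (hX _).aestronglyMeasurable) hC
    (fun j => hXnorm (-j)) hc₁.le hc₁'] with ω hS
  exact ⟨hS, fun t _ θ hθ => abs_tmaEpsT_sub_tmaEps_le X u hc₂ hθ ω t hS⟩

/-- Lemma A.4, part 1 (truncation error bound for the inverted errors): almost surely
`S = Σ_{j≥0} c₁^j |X_{−j}|` is finite and for every `t ≥ 1` and `θ ∈ Θ`,
`|ε̃_t(θ) − ε_t(θ)| ≤ c₂^{-1/2} c₁^t S`. -/
theorem stmt7 {Ω : Type*} [MeasurableSpace Ω] (P : Measure Ω) [IsProbabilityMeasure P]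
    (u c₁ c₂ c₃ : ℝ) (hc₁ : 0 < c₁) (hc₁' : c₁ < 1) (hc₂ : 0 < c₂) (hc₂₃ : c₂ ≤ c₃)
    (φ₀ ξ₀ s₀ : ℝ) (hθ₀ : (φ₀, ξ₀, s₀) ∈ tmaTheta c₁ c₂ c₃)
    (e X : ℤ → Ω → ℝ) (he : ∀ t, Measurable (e t)) (hX : ∀ t, Measurable (X t))
    (heG : ∀ t, P.map (e t) = gaussianReal 0 1)
    (hmodel : ∀ᵐ ω ∂P, ∀ t : ℤ, X t ω =
      (φ₀ + ξ₀ * (if X (t - 1) ω ≤ u then 1 else 0)) * Real.sqrt s₀ * e (t - 1) ω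
        + Real.sqrt s₀ * e t ω) :
    ∀ᵐ ω ∂P,
      Summable (fun j : ℕ => c₁ ^ j * |X (-(j : ℤ)) ω|) ∧
      ∀ t : ℕ, 1 ≤ t → ∀ θ ∈ tmaTheta c₁ c₂ c₃,
        |tmaEpsT X u θ t ω - tmaEps X u θ (t : ℤ) ω|
          ≤ (Real.sqrt c₂)⁻¹ * c₁ ^ t * ∑' j : ℕ, c₁ ^ j * |X (-(j : ℤ)) ω| :=
  stmt7_general P u c₁ c₂ c₃ hc₁ hc₁' hc₂ φ₀ ξ₀ s₀ hθ₀ e X he hX heG hmodel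
end

section
/- Almost-sure summability of products of score approximation errors for GARCH (Lemma A.9 of the paper, first claim, conditional form): Assume (i) there are constants M_d such that for every real d ≥ 1, every t ≥ 1, and every coordinate index i: E[ sup_{θ∈N} (X_t²/S_t(θ))^d ] ≤ M_d and E[ sup_{θ∈N} |(∂S_t/∂θ_i)(θ)/S_t(θ)|^d ] ≤ M_d; and (ii) there exist constants K ≥ 0 and ρ ∈ (0,1) such that almost surely, for every t ≥ 1 and every i: sup_{θ∈N} |(∂S_t/∂θ_i)(θ) − (∂S̃_t/∂θ_i)(θ)| ≤ K ρ^t and sup_{θ∈N} |1/S_t(θ) − 1/S̃_t(θ)| ≤ K ρ^t / S_t(θ). Then for all coordinate indices i, j, almost surely Σ_{t=1}^∞ sup_{θ∈N} | (∂l_t/∂θ_i)(θ)(∂l_t/∂θ_j)(θ) − (∂l̃_t/∂θ_i)(θ)(∂l̃_t/∂θ_j)(θ) | < ∞. -/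
open MeasureTheory ProbabilityTheory
open scoped ENNReal

/-- The `θᵢ`-score of the Gaussian quasi-log-likelihood
`l(θ) = -(1/2)(log S(θ) + X²/S(θ))`, namely
`∂l/∂θᵢ = (1/2)(X²/S − 1)(∂S/∂θᵢ)/S`. -/
noncomputable def garchScore {Ω : Type*} {m : ℕ} (X : Ω → ℝ)
    (S : (Fin m → ℝ) → Ω → ℝ) (i : Fin m) (θ : Fin m → ℝ) (ω : Ω) : ℝ :=
  (1 / 2) * (X ω ^ 2 / S θ ω - 1) *
    (fderiv ℝ (fun θ' => S θ' ω) θ (Pi.single i 1) / S θ ω)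

/-!
Write `a = X²/S` and `bᵢ = ∂ᵢS/S`, so that `∂ᵢl = ½(a - 1)bᵢ`. The truncation bounds say that
`a - 1` and `bᵢ` move by at most `Kρᵗ` relative to the scales `a + 1` and `|bᵢ| + 1/w`, and such
relative perturbations multiply, so `|∂ᵢl ∂ⱼl - ∂ᵢl̃ ∂ⱼl̃| ≤ C Kρᵗ (a⁴ + |bᵢ|⁴ + |bⱼ|⁴ + 1)` for all
`θ`. The fourth moments of the suprema over `N` are bounded uniformly in `t`, so the series has
expectation at most `Σ C Kρᵗ (3 M₄ + 1) < ∞` and is finite almost surely. The suprema are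
measurable because, by continuity in `θ`, they are suprema over a countable dense subset of `N`.
-/

open Filter Topology Set

def IsPerturbation (ε L U u u' : ℝ) : Prop :=
  |u| ≤ U ∧ |u'| ≤ L * U ∧ |u - u'| ≤ ε * U

namespace IsPerturbation

variable {ε K L U V u u' v v' : ℝ}

theorem of_abs_sub_le (hu : |u| ≤ U) (huu' : |u - u'| ≤ ε * U) (hεK : ε ≤ K) :
    IsPerturbation ε (1 + K) U u u' := by
  have hU : 0 ≤ U := (abs_nonneg u).trans hu
  have h := abs_sub_abs_le_abs_sub u' u
  rw [abs_sub_comm] at h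
  refine ⟨hu, ?_, huu'⟩
  nlinarith [mul_le_mul_of_nonneg_right hεK hU]

theorem const_mul (c : ℝ) (hu : IsPerturbation ε L U u u') :
    IsPerturbation ε L (|c| * U) (c * u) (c * u') := by
  obtain ⟨h₁, h₂, h₃⟩ := hu
  refine ⟨?_, ?_, ?_⟩
  · rw [abs_mul]; exact mul_le_mul_of_nonneg_left h₁ (abs_nonneg c)
  · rw [abs_mul, mul_left_comm]; exact mul_le_mul_of_nonneg_left h₂ (abs_nonneg c)
  · rw [← mul_sub, abs_mul, mul_left_comm]; exact mul_le_mul_of_nonneg_left h₃ (abs_nonneg c)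

theorem mul (hu : IsPerturbation ε L U u u') (hv : IsPerturbation ε L V v v') :
    IsPerturbation (ε * (1 + L)) (L ^ 2) (U * V) (u * v) (u' * v') := by
  obtain ⟨hu₁, hu₂, hu₃⟩ := hu
  obtain ⟨hv₁, hv₂, hv₃⟩ := hv
  have hU : 0 ≤ U := (abs_nonneg u).trans hu₁
  have hLU : 0 ≤ L * U := (abs_nonneg u').trans hu₂
  have hεU : 0 ≤ ε * U := (abs_nonneg _).trans hu₃
  refine ⟨?_, ?_, ?_⟩
  · rw [abs_mul]; exact mul_le_mul hu₁ hv₁ (abs_nonneg v) hU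
  · rw [abs_mul]
    calc |u'| * |v'| ≤ (L * U) * (L * V) := mul_le_mul hu₂ hv₂ (abs_nonneg v') hLU
      _ = L ^ 2 * (U * V) := by ring
  · calc |u * v - u' * v'| = |u * (v - v') + (u - u') * v'| := by ring_nf
      _ ≤ |u| * |v - v'| + |u - u'| * |v'| := by
        rw [← abs_mul, ← abs_mul]; exact abs_add_le _ _
      _ ≤ U * (ε * V) + (ε * U) * (L * V) :=
        add_le_add (mul_le_mul hu₁ hv₃ (abs_nonneg _) hU) (mul_le_mul hu₃ hv₂ (abs_nonneg _) hεU)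
      _ = ε * (1 + L) * (U * V) := by ring

end IsPerturbation

section Truncation

variable {w ε K x S S' D D' : ℝ}

theorem isPerturbation_div_sub_one (hx : 0 ≤ x) (hS : 0 < S) (hε : 0 ≤ ε) (hεK : ε ≤ K)
    (hinv : |1 / S - 1 / S'| ≤ ε / S) :
    IsPerturbation ε (1 + K) (x / S + 1) (x / S - 1) (x / S' - 1) := by
  have ha : 0 ≤ x / S := by positivity
  refine .of_abs_sub_le (abs_le.2 ⟨by linarith, by linarith⟩) ?_ hεK
  calc |x / S - 1 - (x / S' - 1)| = x * |1 / S - 1 / S'| := by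
        rw [← abs_of_nonneg hx, ← abs_mul, abs_of_nonneg hx]; ring_nf
    _ ≤ x * (ε / S) := mul_le_mul_of_nonneg_left hinv hx
    _ ≤ ε * (x / S + 1) := by rw [mul_div_left_comm, mul_add_one]; linarith [mul_nonneg hε ha]

theorem isPerturbation_div (hw : 0 < w) (hS : 0 < S) (hS' : w ≤ S') (hε : 0 ≤ ε)
    (hεK : ε ≤ K) (hD : |D - D'| ≤ ε) (hinv : |1 / S - 1 / S'| ≤ ε / S) :
    IsPerturbation ε (1 + K) (|D / S| + w⁻¹) (D / S) (D' / S') := by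
  have hS'0 : 0 < S' := hw.trans_le hS'
  refine .of_abs_sub_le (le_add_of_nonneg_right (by positivity)) ?_ hεK
  calc |D / S - D' / S'| = |D * (1 / S - 1 / S') + (D - D') * S'⁻¹| := by
        congr 1; field_simp; ring
    _ ≤ |D| * (ε / S) + ε * w⁻¹ := by
        refine (abs_add_le _ _).trans (add_le_add ?_ ?_) <;> rw [abs_mul]
        · exact mul_le_mul_of_nonneg_left hinv (abs_nonneg D)
        · rw [abs_inv, abs_of_pos hS'0]
          exact mul_le_mul hD (inv_anti₀ hw hS') (by positivity) hε
    _ = ε * (|D / S| + w⁻¹) := by rw [abs_div, abs_of_pos hS]; ring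

theorem abs_score_mul_sub_le {Di Dj Di' Dj' : ℝ} (hw : 0 < w) (hx : 0 ≤ x) (hS : w ≤ S)
    (hS' : w ≤ S') (hε : 0 ≤ ε) (hεK : ε ≤ K) (hDi : |Di - Di'| ≤ ε) (hDj : |Dj - Dj'| ≤ ε)
    (hinv : |1 / S - 1 / S'| ≤ ε / S) :
    |1 / 2 * (x / S - 1) * (Di / S) * (1 / 2 * (x / S - 1) * (Dj / S))
        - 1 / 2 * (x / S' - 1) * (Di' / S') * (1 / 2 * (x / S' - 1) * (Dj' / S'))|
      ≤ ε * ((2 + K) * (1 + (1 + K) ^ 2) * (2 * (1 + 2 * w⁻¹ ^ 4)))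
          * ((x / S) ^ 4 + |Di / S| ^ 4 + |Dj / S| ^ 4 + 1) := by
  have hS0 : 0 < S := hw.trans_le hS
  have hscale := (isPerturbation_div_sub_one hx hS0 hε hεK hinv).const_mul (1 / 2)
  have hprod := ((hscale.mul (isPerturbation_div hw hS0 hS' hε hεK hDi hinv)).mul
    (hscale.mul (isPerturbation_div hw hS0 hS' hε hεK hDj hinv))).2.2
  have hquartic : ∀ a p q c : ℝ, 0 ≤ a → 0 ≤ p → 0 ≤ q → 0 ≤ c →
      1 / 2 * (a + 1) * (p + c) * (1 / 2 * (a + 1) * (q + c))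
        ≤ 2 * (1 + 2 * c ^ 4) * (a ^ 4 + p ^ 4 + q ^ 4 + 1) := by
    intro a p q c ha hp hq hc
    have hamgm : (a + 1) ^ 2 * ((p + c) * (q + c)) ≤ (a + 1) ^ 4 + (p + c) ^ 4 + (q + c) ^ 4 := by
      nlinarith [sq_nonneg ((a + 1) ^ 2 - (p + c) * (q + c)), sq_nonneg ((p + c) ^ 2 - (q + c) ^ 2)]
    have hA := add_pow_le ha zero_le_one 4
    have hP := add_pow_le hp hc 4
    have hQ := add_pow_le hq hc 4
    have : 0 ≤ c ^ 4 * (a ^ 4 + p ^ 4 + q ^ 4) := by positivity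
    norm_num at hA hP hQ
    nlinarith
  have hK : 0 ≤ K := hε.trans hεK
  rw [abs_of_pos (by norm_num : (0 : ℝ) < 1 / 2)] at hprod
  calc _ ≤ _ := hprod
    _ = ε * ((2 + K) * (1 + (1 + K) ^ 2)) * (1 / 2 * (x / S + 1) * (|Di / S| + w⁻¹)
          * (1 / 2 * (x / S + 1) * (|Dj / S| + w⁻¹))) := by
        ring
    _ ≤ ε * ((2 + K) * (1 + (1 + K) ^ 2))
          * (2 * (1 + 2 * w⁻¹ ^ 4) * ((x / S) ^ 4 + |Di / S| ^ 4 + |Dj / S| ^ 4 + 1)) :=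
        mul_le_mul_of_nonneg_left
          (hquartic _ _ _ _ (by positivity) (abs_nonneg _) (abs_nonneg _) (by positivity))
          (by positivity)
    _ = _ := by ring

end Truncation

theorem biSup_inter_dense_eq {E α : Type*} [TopologicalSpace E] [CompleteLinearOrder α]
    [TopologicalSpace α] [ClosedIicTopology α] {N D : Set E} (hN : IsOpen N) (hD : Dense D)
    {f : E → α} (hf : ContinuousOn f N) :
    ⨆ θ ∈ N ∩ D, f θ = ⨆ θ ∈ N, f θ := by
  refine le_antisymm (biSup_mono fun _ => And.left) (iSup₂_le fun θ hθ => ?_)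
  have hclosure : f θ ∈ closure (f '' (N ∩ D)) :=
    (hf.continuousAt (hN.mem_nhds hθ)).continuousWithinAt.mem_closure_image
      (hD.open_subset_closure_inter hN hθ)
  have hsub : f '' (N ∩ D) ⊆ Iic (⨆ θ ∈ N ∩ D, f θ) :=
    image_subset_iff.2 fun θ' hθ' => le_iSup₂ (f := fun θ _ => f θ) θ' hθ'
  exact closure_minimal hsub isClosed_Iic hclosure

theorem measurable_biSup_of_continuousOn {Ω E : Type*} [MeasurableSpace Ω] [TopologicalSpace E]
    [TopologicalSpace.SeparableSpace E] {N : Set E} (hN : IsOpen N) {F : E → Ω → ℝ≥0∞}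
    (hcont : ∀ ω, ContinuousOn (F · ω) N) (hmeas : ∀ θ ∈ N, Measurable (F θ)) :
    Measurable fun ω => ⨆ θ ∈ N, F θ ω := by
  obtain ⟨D, hDc, hD⟩ := TopologicalSpace.exists_countable_dense E
  simp_rw [← biSup_inter_dense_eq hN hD (hcont _)]
  exact .biSup _ (hDc.mono inter_subset_right) fun θ hθ => hmeas θ hθ.1

theorem measurable_fderiv_apply {Ω E : Type*} [MeasurableSpace Ω] [NormedAddCommGroup E]
    [NormedSpace ℝ E] {F : E → Ω → ℝ} (hF : ∀ θ, Measurable (F θ)) {θ : E}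
    (hd : ∀ ω, DifferentiableAt ℝ (F · ω) θ) (v : E) :
    Measurable fun ω => fderiv ℝ (F · ω) θ v :=
  measurable_of_tendsto_metrizable
    (f := fun n : ℕ => fun ω => (n : ℝ) • (F (θ + (n : ℝ)⁻¹ • v) ω - F θ ω))
    (fun _ => measurable_const.mul ((hF _).sub (hF _)))
    (tendsto_pi_nhds.2 fun ω =>
      ((hd ω).hasFDerivAt.lim_real v).comp tendsto_natCast_atTop_atTop)

theorem ae_tsum_ofReal_mul_lt_top {Ω : Type*} [MeasurableSpace Ω] {μ : Measure Ω}
    {Φ : ℕ → Ω → ℝ≥0∞} {c : ℕ → ℝ} {B : ℝ≥0∞} (hΦ : ∀ t, AEMeasurable (Φ t) μ)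
    (hΦB : ∀ t, ∫⁻ ω, Φ t ω ∂μ ≤ B) (hB : B ≠ ⊤) (hc : Summable c) :
    ∀ᵐ ω ∂μ, ∑' t, ENNReal.ofReal (c t) * Φ t ω < ⊤ := by
  refine ae_lt_top' (AEMeasurable.tsum fun t => (hΦ t).const_mul _) (ne_top_of_le_ne_top
    (ENNReal.mul_ne_top hc.tsum_ofReal_ne_top hB) ?_)
  calc ∫⁻ ω, ∑' t, ENNReal.ofReal (c t) * Φ t ω ∂μ
        = ∑' t, ENNReal.ofReal (c t) * ∫⁻ ω, Φ t ω ∂μ := by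
        rw [lintegral_tsum fun t => (hΦ t).const_mul _]
        simp_rw [lintegral_const_mul'' _ (hΦ _)]
    _ ≤ ∑' t, ENNReal.ofReal (c t) * B := ENNReal.tsum_le_tsum fun t => by gcongr; exact hΦB t
    _ = (∑' t, ENNReal.ofReal (c t)) * B := ENNReal.tsum_mul_right

theorem biSup_ofReal_le_mul {ι : Type*} {s : Set ι} {f g₁ g₂ g₃ : ι → ℝ} {c : ℝ}
    (hg₁ : ∀ θ ∈ s, 0 ≤ g₁ θ) (hg₂ : ∀ θ ∈ s, 0 ≤ g₂ θ) (hg₃ : ∀ θ ∈ s, 0 ≤ g₃ θ)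
    (hf : ∀ θ ∈ s, f θ ≤ c * (g₁ θ + g₂ θ + g₃ θ + 1)) :
    ⨆ θ ∈ s, ENNReal.ofReal (f θ) ≤ ENNReal.ofReal c * ((⨆ θ ∈ s, ENNReal.ofReal (g₁ θ))
      + (⨆ θ ∈ s, ENNReal.ofReal (g₂ θ)) + (⨆ θ ∈ s, ENNReal.ofReal (g₃ θ)) + 1) := by
  refine iSup₂_le fun θ hθ => (ENNReal.ofReal_le_ofReal (hf θ hθ)).trans ?_
  have h₁ := hg₁ θ hθ
  have h₂ := hg₂ θ hθ
  have h₃ := hg₃ θ hθ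
  rw [ENNReal.ofReal_mul' (by linarith), ENNReal.ofReal_add (by linarith) zero_le_one,
    ENNReal.ofReal_add (by linarith) h₃, ENNReal.ofReal_add h₁ h₂, ENNReal.ofReal_one]
  gcongr <;> exact le_iSup₂ (f := fun θ _ => ENNReal.ofReal _) θ hθ

theorem measurable_biSup_sq_div_pow {Ω E : Type*} [MeasurableSpace Ω] [TopologicalSpace E]
    [TopologicalSpace.SeparableSpace E] {N : Set E} {X : Ω → ℝ} {S : E → Ω → ℝ} (hN : IsOpen N)
    (hX : Measurable X) (hS : ∀ θ, Measurable (S θ)) (hcont : ∀ ω, ContinuousOn (S · ω) N)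
    (hne : ∀ ω, ∀ θ ∈ N, S θ ω ≠ 0) (n : ℕ) :
    Measurable fun ω => ⨆ θ ∈ N, ENNReal.ofReal ((X ω ^ 2 / S θ ω) ^ n) :=
  measurable_biSup_of_continuousOn hN
    (fun ω => ENNReal.continuous_ofReal.comp_continuousOn
      ((continuousOn_const.div (hcont ω) (hne ω)).pow n))
    (fun θ _ => (((hX.pow_const 2).div (hS θ)).pow_const n).ennreal_ofReal)

section Envelope

variable {Ω E : Type*} [MeasurableSpace Ω] [NormedAddCommGroup E] [NormedSpace ℝ E]
  {N : Set E} {X : Ω → ℝ} {S : E → Ω → ℝ}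

noncomputable def garchEnvelope (N : Set E) (X : Ω → ℝ) (S : E → Ω → ℝ) (u v : E) (ω : Ω) :
    ℝ≥0∞ :=
  (⨆ θ ∈ N, ENNReal.ofReal ((X ω ^ 2 / S θ ω) ^ 4))
    + (⨆ θ ∈ N, ENNReal.ofReal (|fderiv ℝ (S · ω) θ u / S θ ω| ^ 4))
    + (⨆ θ ∈ N, ENNReal.ofReal (|fderiv ℝ (S · ω) θ v / S θ ω| ^ 4)) + 1

variable [TopologicalSpace.SeparableSpace E]

theorem measurable_biSup_fderiv_div_pow (hN : IsOpen N) (hS : ∀ θ, Measurable (S θ))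
    (hsmooth : ∀ ω, ContDiffOn ℝ 1 (S · ω) N) (hne : ∀ ω, ∀ θ ∈ N, S θ ω ≠ 0) (v : E) (n : ℕ) :
    Measurable fun ω => ⨆ θ ∈ N, ENNReal.ofReal (|fderiv ℝ (S · ω) θ v / S θ ω| ^ n) := by
  refine measurable_biSup_of_continuousOn hN (fun ω => ?_) (fun θ hθ => ?_)
  · have hderiv := ((hsmooth ω).continuousOn_fderiv_of_isOpen hN le_rfl).clm_apply
      (continuousOn_const (c := v))
    exact ENNReal.continuous_ofReal.comp_continuousOn
      ((hderiv.div (hsmooth ω).continuousOn (hne ω)).abs.pow n)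
  · have hdiff : ∀ ω, DifferentiableAt ℝ (S · ω) θ := fun ω =>
      ((hsmooth ω).differentiableOn one_ne_zero).differentiableAt (hN.mem_nhds hθ)
    exact (((measurable_fderiv_apply hS hdiff v).div (hS θ)).abs.pow_const n).ennreal_ofReal

theorem measurable_garchEnvelope (hN : IsOpen N) (hX : Measurable X)
    (hS : ∀ θ, Measurable (S θ)) (hsmooth : ∀ ω, ContDiffOn ℝ 1 (S · ω) N)
    (hne : ∀ ω, ∀ θ ∈ N, S θ ω ≠ 0) (u v : E) :
    Measurable (garchEnvelope N X S u v) :=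
  (((measurable_biSup_sq_div_pow hN hX hS (fun ω => (hsmooth ω).continuousOn) hne 4).add
    (measurable_biSup_fderiv_div_pow hN hS hsmooth hne u 4)).add
    (measurable_biSup_fderiv_div_pow hN hS hsmooth hne v 4)).add measurable_const

theorem lintegral_garchEnvelope_le (μ : Measure Ω) [IsProbabilityMeasure μ] (hN : IsOpen N)
    (hS : ∀ θ, Measurable (S θ)) (hsmooth : ∀ ω, ContDiffOn ℝ 1 (S · ω) N)
    (hne : ∀ ω, ∀ θ ∈ N, S θ ω ≠ 0) {u v : E} {B : ℝ≥0∞}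
    (hX : ∫⁻ ω, ⨆ θ ∈ N, ENNReal.ofReal ((X ω ^ 2 / S θ ω) ^ 4) ∂μ ≤ B)
    (hu : ∫⁻ ω, ⨆ θ ∈ N, ENNReal.ofReal (|fderiv ℝ (S · ω) θ u / S θ ω| ^ 4) ∂μ ≤ B)
    (hv : ∫⁻ ω, ⨆ θ ∈ N, ENNReal.ofReal (|fderiv ℝ (S · ω) θ v / S θ ω| ^ 4) ∂μ ≤ B) :
    ∫⁻ ω, garchEnvelope N X S u v ω ∂μ ≤ 3 * B + 1 := by
  unfold garchEnvelope
  rw [lintegral_add_right _ measurable_const,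
    lintegral_add_right _ (measurable_biSup_fderiv_div_pow hN hS hsmooth hne v 4),
    lintegral_add_right _ (measurable_biSup_fderiv_div_pow hN hS hsmooth hne u 4),
    lintegral_const, measure_univ, mul_one]
  calc _ ≤ B + B + B + 1 := by gcongr
    _ = 3 * B + 1 := by ring

end Envelope

theorem biSup_abs_garchScore_mul_sub_le {Ω : Type*} {m : ℕ} {N : Set (Fin m → ℝ)} {X : Ω → ℝ}
    {S S' : (Fin m → ℝ) → Ω → ℝ} {ω : Ω} {w K ε : ℝ} (hw : 0 < w)
    (hS : ∀ θ ∈ N, w ≤ S θ ω) (hS' : ∀ θ ∈ N, w ≤ S' θ ω) (hε : 0 ≤ ε) (hεK : ε ≤ K)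
    (htrunc : ∀ k : Fin m, ∀ θ ∈ N,
      |fderiv ℝ (S · ω) θ (Pi.single k 1) - fderiv ℝ (S' · ω) θ (Pi.single k 1)| ≤ ε ∧
      |1 / S θ ω - 1 / S' θ ω| ≤ ε / S θ ω) (i j : Fin m) :
    ⨆ θ ∈ N, ENNReal.ofReal |garchScore X S i θ ω * garchScore X S j θ ω
        - garchScore X S' i θ ω * garchScore X S' j θ ω|
      ≤ ENNReal.ofReal (ε * ((2 + K) * (1 + (1 + K) ^ 2) * (2 * (1 + 2 * w⁻¹ ^ 4))))
        * garchEnvelope N X S (Pi.single i 1) (Pi.single j 1) ω := by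
  refine biSup_ofReal_le_mul (fun _ _ => by positivity) (fun _ _ => by positivity)
    (fun _ _ => by positivity) fun θ hθ => ?_
  obtain ⟨hDi, hinv⟩ := htrunc i θ hθ
  exact abs_score_mul_sub_le hw (sq_nonneg _) (hS θ hθ) (hS' θ hθ) hε hεK hDi
    (htrunc j θ hθ).1 hinv

theorem stmt12_general {Ω : Type*} [MeasurableSpace Ω] (P : Measure Ω) [IsProbabilityMeasure P]
    {m : ℕ} (N : Set (Fin m → ℝ)) (hN : IsOpen N) (w : ℝ) (hw : 0 < w)
    (X : ℕ → Ω → ℝ) (S Sa : ℕ → (Fin m → ℝ) → Ω → ℝ)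
    (hXmeas : ∀ t, Measurable (X t))
    (hSsmooth : ∀ t ω, ContDiffOn ℝ 1 (fun θ => S t θ ω) N)
    (hSw : ∀ t ω, ∀ θ ∈ N, w ≤ S t θ ω)
    (hSaw : ∀ t ω, ∀ θ ∈ N, w ≤ Sa t θ ω)
    (hSmeas : ∀ t θ, Measurable (S t θ))
    (M : ℝ → ℝ≥0∞) (hM : ∀ d : ℝ, 1 ≤ d → M d < ⊤)
    (h1 : ∀ d : ℝ, 1 ≤ d → ∀ t : ℕ, 1 ≤ t →
      ∫⁻ ω, ⨆ θ ∈ N, ENNReal.ofReal ((X t ω ^ 2 / S t θ ω) ^ d) ∂P ≤ M d)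
    (h2 : ∀ d : ℝ, 1 ≤ d → ∀ t : ℕ, 1 ≤ t → ∀ i : Fin m,
      ∫⁻ ω, ⨆ θ ∈ N, ENNReal.ofReal
        (|fderiv ℝ (fun θ' => S t θ' ω) θ (Pi.single i 1) / S t θ ω| ^ d) ∂P ≤ M d)
    (K ρ : ℝ) (hK : 0 ≤ K) (hρ : ρ ∈ Set.Ioo (0 : ℝ) 1)
    (htrunc : ∀ᵐ ω ∂P, ∀ t : ℕ, 1 ≤ t → ∀ i : Fin m, ∀ θ ∈ N,
      |fderiv ℝ (fun θ' => S t θ' ω) θ (Pi.single i 1)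
          - fderiv ℝ (fun θ' => Sa t θ' ω) θ (Pi.single i 1)| ≤ K * ρ ^ t ∧
      |1 / S t θ ω - 1 / Sa t θ ω| ≤ K * ρ ^ t / S t θ ω) :
    ∀ i j : Fin m, ∀ᵐ ω ∂P,
      (∑' t : ℕ, ⨆ θ ∈ N, ENNReal.ofReal
        |garchScore (X (t + 1)) (S (t + 1)) i θ ω * garchScore (X (t + 1)) (S (t + 1)) j θ ω
          - garchScore (X (t + 1)) (Sa (t + 1)) i θ ω *
              garchScore (X (t + 1)) (Sa (t + 1)) j θ ω|) < ⊤ := by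
  intro i j
  obtain ⟨hρ0, hρ1⟩ := hρ
  have hSne : ∀ t ω, ∀ θ ∈ N, S t θ ω ≠ 0 := fun t ω θ hθ => (hw.trans_le (hSw t ω θ hθ)).ne'
  have hmoment : ∀ t : ℕ, ∫⁻ ω, garchEnvelope N (X (t + 1)) (S (t + 1))
      (Pi.single i 1) (Pi.single j 1) ω ∂P ≤ 3 * M 4 + 1 := fun t => by
    refine lintegral_garchEnvelope_le P hN (hSmeas _) (hSsmooth _) (hSne _) ?_ ?_ ?_
    · simpa only [Real.rpow_ofNat] using h1 4 (by norm_num) (t + 1) (by omega)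
    · simpa only [Real.rpow_ofNat] using h2 4 (by norm_num) (t + 1) (by omega) i
    · simpa only [Real.rpow_ofNat] using h2 4 (by norm_num) (t + 1) (by omega) j
  have hgeom : ∀ C : ℝ, Summable fun t : ℕ => K * ρ ^ (t + 1) * C := fun C =>
    (((summable_geometric_of_lt_one hρ0.le hρ1).mul_left (K * ρ)).mul_right C).congr
      fun t => by ring
  have hρK : ∀ t : ℕ, K * ρ ^ (t + 1) ≤ K := fun t =>
    mul_le_of_le_one_right hK (pow_le_one₀ hρ0.le hρ1.le)
  filter_upwards [ae_tsum_ofReal_mul_lt_top (fun t => (measurable_garchEnvelope hN (hXmeas _)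
      (hSmeas _) (hSsmooth _) (hSne _) _ _).aemeasurable) hmoment
      (by have := (hM 4 (by norm_num)).ne; finiteness) (hgeom _),
    htrunc] with ω hω htruncω
  refine (ENNReal.tsum_le_tsum fun t => ?_).trans_lt hω
  exact biSup_abs_garchScore_mul_sub_le hw (hSw _ ω) (hSaw _ ω) (by positivity) (hρK t)
    (fun k θ hθ => htruncω (t + 1) (by omega) k θ hθ) i j

/-- Lemma A.9, first claim (conditional form): under uniform moment bounds on
`X_t²/S_t` and `|∂ᵢS_t/S_t|` and geometric almost-sure truncation bounds, for all
coordinates `i, j`, almost surely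
`Σ_{t=1}^∞ sup_{θ∈N} |∂ᵢl_t ∂ⱼl_t − ∂ᵢl̃_t ∂ⱼl̃_t| < ∞`. -/
theorem stmt12 {Ω : Type*} [MeasurableSpace Ω] (P : Measure Ω) [IsProbabilityMeasure P]
    {m : ℕ} (N : Set (Fin m → ℝ)) (hN : IsOpen N) (w : ℝ) (hw : 0 < w)
    (X : ℕ → Ω → ℝ) (S Sa : ℕ → (Fin m → ℝ) → Ω → ℝ)
    (hXmeas : ∀ t, Measurable (X t))
    (hSsmooth : ∀ t ω, ContDiffOn ℝ 1 (fun θ => S t θ ω) N)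
    (hSasmooth : ∀ t ω, ContDiffOn ℝ 1 (fun θ => Sa t θ ω) N)
    (hSw : ∀ t ω, ∀ θ ∈ N, w ≤ S t θ ω)
    (hSaw : ∀ t ω, ∀ θ ∈ N, w ≤ Sa t θ ω)
    (hSmeas : ∀ t θ, Measurable (S t θ)) (hSameas : ∀ t θ, Measurable (Sa t θ))
    (M : ℝ → ℝ≥0∞) (hM : ∀ d : ℝ, 1 ≤ d → M d < ⊤)
    (h1 : ∀ d : ℝ, 1 ≤ d → ∀ t : ℕ, 1 ≤ t →
      ∫⁻ ω, ⨆ θ ∈ N, ENNReal.ofReal ((X t ω ^ 2 / S t θ ω) ^ d) ∂P ≤ M d)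
    (h2 : ∀ d : ℝ, 1 ≤ d → ∀ t : ℕ, 1 ≤ t → ∀ i : Fin m,
      ∫⁻ ω, ⨆ θ ∈ N, ENNReal.ofReal
        (|fderiv ℝ (fun θ' => S t θ' ω) θ (Pi.single i 1) / S t θ ω| ^ d) ∂P ≤ M d)
    (K ρ : ℝ) (hK : 0 ≤ K) (hρ : ρ ∈ Set.Ioo (0 : ℝ) 1)
    (htrunc : ∀ᵐ ω ∂P, ∀ t : ℕ, 1 ≤ t → ∀ i : Fin m, ∀ θ ∈ N,
      |fderiv ℝ (fun θ' => S t θ' ω) θ (Pi.single i 1)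
          - fderiv ℝ (fun θ' => Sa t θ' ω) θ (Pi.single i 1)| ≤ K * ρ ^ t ∧
      |1 / S t θ ω - 1 / Sa t θ ω| ≤ K * ρ ^ t / S t θ ω) :
    ∀ i j : Fin m, ∀ᵐ ω ∂P,
      (∑' t : ℕ, ⨆ θ ∈ N, ENNReal.ofReal
        |garchScore (X (t + 1)) (S (t + 1)) i θ ω * garchScore (X (t + 1)) (S (t + 1)) j θ ω
          - garchScore (X (t + 1)) (Sa (t + 1)) i θ ω *
              garchScore (X (t + 1)) (Sa (t + 1)) j θ ω|) < ⊤ :=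
  stmt12_general P N hN w hw X S Sa hXmeas hSsmooth hSw hSaw hSmeas M hM h1 h2 K ρ hK hρ htrunc
end
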